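/- arXiv:2312.06513 — 3 statements merged into one kernel-verified Lean document; each statement's English description precedes it below -/
import Mathlib

section
/- Let a, b ≥ 0 be integers with a + b ≥ 2. Then a valid weight function of the truncated affine arrangement 𝒜^{a,b}_{n−1} is m-acyclic (has no m-ascending directed cycle) if and only if it contains no m-ascending directed cycle of length at most four. -/
/-- Cyclically consecutive pairs along a list of vertices. -/
def cpairs {n : ℕ} (c : List (Fin n)) : List (Fin n × Fin n) := c.zip (c.rotate 1)

/-- `c` is a directed cycle of the weighted digraph `w`, an edge `u → v`
being present when `w u v ≠ ⊥` (`⊥` stands for `-∞`). -/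
def IsCycle {n : ℕ} (w : Fin n → Fin n → WithBot ℤ) (c : List (Fin n)) : Prop :=
  2 ≤ c.length ∧ c.Nodup ∧ ∀ p ∈ cpairs c, w p.1 p.2 ≠ ⊥

/-- Total weight of the edges of a cycle. -/
def cycWeight {n : ℕ} (w : Fin n → Fin n → WithBot ℤ) (c : List (Fin n)) : WithBot ℤ :=
  ((cpairs c).map fun p => w p.1 p.2).sum

/-- An `m`-ascending cycle: a directed cycle of nonnegative total weight. -/
def MAscending {n : ℕ} (w : Fin n → Fin n → WithBot ℤ) (c : List (Fin n)) : Prop :=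
  IsCycle w c ∧ 0 ≤ cycWeight w c

/-- A weighted digraph is `m`-acyclic if it has no `m`-ascending cycle. -/
def MAcyclic {n : ℕ} (w : Fin n → Fin n → WithBot ℤ) : Prop :=
  ∀ c : List (Fin n), ¬ MAscending w c

/-- `w` is a valid weight function of the contiguous integral deformation of
the braid arrangement determined by the bounds `a = α` and `b = β`:
`w i j ∈ {α i j, …, β i j} ∪ {⊥}`, `w i j = ⊥ ↔ w j i = β j i`, and
`w j i = -1 - w i j` whenever both values are finite.  There are no loops. -/
def ValidW {n : ℕ} (a b : Fin n → Fin n → ℤ) (w : Fin n → Fin n → WithBot ℤ) : Prop :=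
  (∀ i, w i i = ⊥) ∧
  ∀ i j : Fin n, i ≠ j →
    (w i j ≠ ⊥ → (a i j : WithBot ℤ) ≤ w i j ∧ w i j ≤ (b i j : WithBot ℤ)) ∧
    (w i j = ⊥ ↔ w j i = (b j i : WithBot ℤ)) ∧
    (∀ x y : ℤ, w i j = (x : WithBot ℤ) → w j i = (y : WithBot ℤ) → y = -1 - x)

/-- Lower bounds of the truncated affine arrangement `A^{a,b}_{n-1}`:
`α(i,j) = 1 - a` for `i < j`, extended by `α(j,i) = -β(i,j) = 1 - b`. -/
def trAlpha {n : ℕ} (a b : ℤ) (u v : Fin n) : ℤ := if u < v then 1 - a else 1 - b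

/-- Upper bounds of the truncated affine arrangement `A^{a,b}_{n-1}`:
`β(i,j) = b - 1` for `i < j`, extended by `β(j,i) = -α(i,j) = a - 1`. -/
def trBeta {n : ℕ} (a b : ℤ) (u v : Fin n) : ℤ := if u < v then b - 1 else a - 1

/-!
Let `u 0 → ⋯ → u (m - 1) → u 0` be a shortest ascending cycle, of weight `S ≥ 0`, and suppose
`m ≥ 5`. A chord between `u p` and `u (p + g)`, `2 ≤ g ≤ m - 2`, closes two shorter cycles,
one in each direction; they are not ascending, so the chord cannot be present both ways (the
two cycles would weigh `S - 1` in total). Hence exactly one direction is present, with the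
maximal weight `β`. Comparing the chords `u p → u (p + g)` and `u p → u (p + g + 1)` through the
triangle inequality `β x z < β x y + β y z + 2` of the truncated affine bounds shows that all
chords at a vertex point the same way, inwards or outwards. The two ends of a chord disagree,
which is impossible along the odd cycle of chords `u 0, u 2, u 4, u 1, u 3`.
-/

lemma List.exists_periodic_eq_map_range {α : Type*} {c : List α} (hc : c ≠ []) :
    ∃ u : ℕ → α, Function.Periodic u c.length ∧ c = (List.range c.length).map u := by
  refine ⟨fun i => c.getD (i % c.length) (c.head hc), fun i => by simp, ?_⟩
  refine List.ext_getElem (by simp) fun i h₁ h₂ => ?_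
  simp [Nat.mod_eq_of_lt h₁, List.getElem?_eq_getElem h₁]

section Cycles

variable {n : ℕ} {w : Fin n → Fin n → WithBot ℤ}

lemma cpairs_map_range (v : ℕ → Fin n) (k : ℕ) :
    cpairs ((List.range (k + 1)).map v) =
      (List.range (k + 1)).map fun i => (v i, v ((i + 1) % (k + 1))) := by
  apply List.ext_getElem (by simp [cpairs])
  intro i h₁ h₂
  simp [cpairs, List.getElem_zip, List.getElem_rotate]

lemma cycWeight_map_range (v : ℕ → Fin n) (k : ℕ) :
    cycWeight w ((List.range (k + 1)).map v) =
      ∑ i ∈ Finset.range k, w (v i) (v (i + 1)) + w (v k) (v 0) := by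
  rw [cycWeight, cpairs_map_range, List.map_map, List.sum_range_succ]
  simp only [Function.comp_apply, Nat.mod_self]
  congr 1
  have hmod : ∀ i ∈ Finset.range k, w (v i) (v ((i + 1) % (k + 1))) = w (v i) (v (i + 1)) :=
    fun i hi => by rw [Nat.mod_eq_of_lt (Nat.succ_lt_succ (Finset.mem_range.1 hi))]
  exact Finset.sum_congr rfl hmod

lemma isCycle_map_range_iff {v : ℕ → Fin n} {k : ℕ} (hk : 0 < k) :
    IsCycle w ((List.range (k + 1)).map v) ↔
      Set.InjOn v (Set.Iic k) ∧ (∀ i < k, w (v i) (v (i + 1)) ≠ ⊥) ∧ w (v k) (v 0) ≠ ⊥ := by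
  have hmod : ∀ i < k, (i + 1) % (k + 1) = i + 1 := fun i hi => Nat.mod_eq_of_lt (by omega)
  simp only [IsCycle, cpairs_map_range, List.length_map, List.length_range, List.forall_mem_map,
    List.mem_range, List.nodup_map_iff_inj_on List.nodup_range, Nat.lt_succ_iff]
  constructor
  · rintro ⟨-, hinj, hedge⟩
    refine ⟨hinj, fun i hi => ?_, by simpa using hedge k le_rfl⟩
    simpa [hmod i hi] using hedge i hi.le
  · rintro ⟨hinj, hedge, hlast⟩
    refine ⟨by omega, hinj, fun j hj => ?_⟩
    rcases hj.lt_or_eq with hj | rfl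
    · simpa [hmod j hj] using hedge j hj
    · simpa using hlast

lemma exists_shortest_mAscending (h : ¬ MAcyclic w) :
    ∃ c, MAscending w c ∧ ∀ c', MAscending w c' → c.length ≤ c'.length := by
  obtain ⟨c, hc, hmin⟩ := (measure (List.length (α := Fin n))).wf.has_min {c | MAscending w c}
    (by simpa only [MAcyclic, not_forall, not_not] using h : ∃ c, MAscending w c)
  exact ⟨c, hc, fun c' hc' => not_lt.1 (hmin c' hc')⟩

end Cycles

lemma Function.Periodic.sum_range_add {M : Type*} [AddCancelCommMonoid M] {f : ℕ → M} {m : ℕ}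
    (hf : Function.Periodic f m) (p : ℕ) :
    ∑ t ∈ Finset.range m, f (p + t) = ∑ t ∈ Finset.range m, f t := by
  induction p with
  | zero => simp
  | succ p ih =>
    rw [← ih]
    have h₁ := Finset.sum_range_succ' (fun t => f (p + t)) m
    have h₂ := Finset.sum_range_succ (fun t => f (p + t)) m
    rw [add_zero] at h₁
    rw [hf p, h₁] at h₂
    simpa only [add_assoc, add_comm 1] using add_right_cancel h₂

namespace ValidW

variable {n : ℕ} {α β : Fin n → Fin n → ℤ} {w : Fin n → Fin n → WithBot ℤ} {i j : Fin n}

lemma eq_bot_iff (hw : ValidW α β w) (hij : i ≠ j) : w i j = ⊥ ↔ w j i = β j i :=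
  (hw.2 i j hij).2.1

lemma add_eq_neg_one (hw : ValidW α β w) (hij : i ≠ j) {x y : ℤ} (hx : w i j = x)
    (hy : w j i = y) : x + y = -1 := by
  have := (hw.2 i j hij).2.2 x y hx hy
  omega

lemma mem_Icc_of_eq (hw : ValidW α β w) (hij : i ≠ j) {x : ℤ} (hx : w i j = x) :
    x ∈ Set.Icc (α i j) (β i j) := by
  have := (hw.2 i j hij).1 (hx ▸ WithBot.coe_ne_bot)
  rw [hx] at this
  exact ⟨WithBot.coe_le_coe.1 this.1, WithBot.coe_le_coe.1 this.2⟩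

end ValidW

/-- A shortest ascending cycle, unrolled into the `m`-periodic vertex sequence `u`;
`e i` is the weight of the edge `u i → u (i + 1)`. -/
structure ShortestAscendingCycle {n : ℕ} (w : Fin n → Fin n → WithBot ℤ) (m : ℕ)
    (u : ℕ → Fin n) (e : ℕ → ℤ) : Prop where
  periodic : Function.Periodic u m
  modEq_of_eq : ∀ i j, u i = u j → i ≡ j [MOD m]
  weight_eq : ∀ i, w (u i) (u (i + 1)) = e i
  sum_nonneg : 0 ≤ ∑ i ∈ Finset.range m, e i
  le_length : ∀ c, MAscending w c → m ≤ c.length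

lemma MAscending.exists_shortestAscendingCycle {n : ℕ} {w : Fin n → Fin n → WithBot ℤ}
    {c : List (Fin n)} (hc : MAscending w c)
    (hmin : ∀ c', MAscending w c' → c.length ≤ c'.length) :
    ∃ u e, ShortestAscendingCycle w c.length u e := by
  obtain ⟨k, hk⟩ : ∃ k, c.length = k + 1 := ⟨c.length - 1, by have := hc.1.1; omega⟩
  have hk0 : 0 < k := by have := hc.1.1; omega
  obtain ⟨u, hper, hcu⟩ :=
    List.exists_periodic_eq_map_range (List.ne_nil_of_length_pos (show 0 < c.length by omega))
  rw [hk] at hper hcu hmin ⊢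
  rw [hcu] at hc
  obtain ⟨hcyc, hwt⟩ := hc
  obtain ⟨hinj, hedge, hlast⟩ := (isCycle_map_range_iff hk0).1 hcyc
  have hwrap : u (k + 1) = u 0 := by simpa using hper 0
  have hedge_lt : ∀ i < k + 1, w (u i) (u (i + 1)) ≠ ⊥ :=
    Nat.forall_lt_succ_right.2 ⟨hedge, hwrap ▸ hlast⟩
  have hsucc_mod : ∀ i, u (i % (k + 1) + 1) = u (i + 1) := fun i => by
    rw [← hper.map_mod_nat (i % (k + 1) + 1), Nat.mod_add_mod, hper.map_mod_nat]
  have hedge_all : ∀ i, w (u i) (u (i + 1)) ≠ ⊥ := fun i => by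
    rw [← hper.map_mod_nat i, ← hsucc_mod i]
    exact hedge_lt _ (Nat.mod_lt i k.succ_pos)
  choose e he using fun i => WithBot.ne_bot_iff_exists.1 (hedge_all i)
  refine ⟨u, e, hper, fun i j hij => ?_, fun i => (he i).symm, ?_, hmin⟩
  · refine hinj (Nat.lt_succ_iff.1 (Nat.mod_lt i k.succ_pos))
      (Nat.lt_succ_iff.1 (Nat.mod_lt j k.succ_pos)) ?_
    rwa [hper.map_mod_nat, hper.map_mod_nat]
  · rw [cycWeight_map_range, ← hwrap,
      ← Finset.sum_range_succ (fun i => w (u i) (u (i + 1)))] at hwt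
    simp only [← he, ← WithBot.coe_sum] at hwt
    exact_mod_cast hwt

namespace ShortestAscendingCycle

open Finset

variable {n : ℕ} {w : Fin n → Fin n → WithBot ℤ} {m : ℕ} {u : ℕ → Fin n} {e : ℕ → ℤ}
  {α β : Fin n → Fin n → ℤ} {p g : ℕ}

lemma injOn_window (hC : ShortestAscendingCycle w m u e) (p : ℕ) {k : ℕ} (hk : k < m) :
    Set.InjOn (fun t => u (p + t)) (Set.Iic k) := fun _ hs _ ht hst =>
  (Nat.ModEq.add_left_cancel' p (hC.modEq_of_eq _ _ hst)).eq_of_lt_of_lt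
    (lt_of_le_of_lt (Set.mem_Iic.1 hs) hk) (lt_of_le_of_lt (Set.mem_Iic.1 ht) hk)

lemma apply_ne_apply_add (hC : ShortestAscendingCycle w m u e) (hg : 0 < g) (hgm : g < m) :
    u p ≠ u (p + g) := fun h =>
  hg.ne (hC.injOn_window p hgm (Set.mem_Iic.2 (Nat.zero_le g)) (Set.mem_Iic.2 le_rfl) h)

lemma apply_add_add_sub (hC : ShortestAscendingCycle w m u e) (hg : g ≤ m) :
    u (p + g + (m - g)) = u p := by
  rw [add_assoc, Nat.add_sub_cancel' hg, hC.periodic]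

lemma periodic_weight (hC : ShortestAscendingCycle w m u e) : Function.Periodic e m := fun i =>
  WithBot.coe_injective <| by
    rw [← hC.weight_eq, ← hC.weight_eq, add_right_comm, hC.periodic, hC.periodic]

lemma sum_window_add_sum_window (hC : ShortestAscendingCycle w m u e) (hg : g ≤ m) :
    ∑ t ∈ range g, e (p + t) + ∑ t ∈ range (m - g), e (p + g + t) = ∑ i ∈ range m, e i := by
  have h := Finset.sum_range_add (fun t => e (p + t)) g (m - g)
  rw [Nat.add_sub_cancel' hg, hC.periodic_weight.sum_range_add] at h
  simp only [h, add_assoc]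

lemma sum_window_add_lt_zero (hC : ShortestAscendingCycle w m u e) {x : ℤ} (hg : 0 < g)
    (hgm : g + 1 < m) (hx : w (u (p + g)) (u p) = x) : ∑ t ∈ range g, e (p + t) + x < 0 := by
  have hcyc : IsCycle w ((List.range (g + 1)).map fun t => u (p + t)) := by
    refine (isCycle_map_range_iff hg).2 ⟨hC.injOn_window p (by omega), fun i _ => ?_, ?_⟩
    · rw [← add_assoc, hC.weight_eq]
      exact WithBot.coe_ne_bot
    · rw [add_zero, hx]
      exact WithBot.coe_ne_bot
  by_contra! hnonneg
  have hlen := hC.le_length _ ⟨hcyc, ?_⟩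
  · simp only [List.length_map, List.length_range] at hlen
    omega
  rw [cycWeight_map_range]
  simp only [← add_assoc, hC.weight_eq, add_zero, hx, ← WithBot.coe_sum, ← WithBot.coe_add]
  exact_mod_cast hnonneg

lemma chord_eq_bot_or (hC : ShortestAscendingCycle w m u e) (hw : ValidW α β w) (hg : 2 ≤ g)
    (hgm : g + 2 ≤ m) : w (u p) (u (p + g)) = ⊥ ∨ w (u (p + g)) (u p) = ⊥ := by
  by_contra! h
  obtain ⟨⟨x, hx⟩, ⟨y, hy⟩⟩ := And.imp WithBot.ne_bot_iff_exists.1 WithBot.ne_bot_iff_exists.1 h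
  have hback := hC.sum_window_add_lt_zero (p := p) (by omega) (by omega) hy.symm
  have hfwd := hC.sum_window_add_lt_zero (p := p + g) (g := m - g) (by omega) (by omega)
    (by rw [hC.apply_add_add_sub (by omega)]; exact hx.symm)
  have hxy := hw.add_eq_neg_one (hC.apply_ne_apply_add (by omega) (by omega)) hx.symm hy.symm
  have hsum := hC.sum_window_add_sum_window (p := p) (g := g) (by omega)
  have := hC.sum_nonneg
  omega

lemma sum_add_lt_sum_window_of_ne_bot (hC : ShortestAscendingCycle w m u e) (hw : ValidW α β w)
    (hg : 2 ≤ g) (hgm : g + 2 ≤ m) (hf : w (u p) (u (p + g)) ≠ ⊥) :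
    ∑ i ∈ range m, e i + β (u p) (u (p + g)) < ∑ t ∈ range g, e (p + t) := by
  have hβ := (hw.eq_bot_iff (hC.apply_ne_apply_add (by omega) (by omega)).symm).1
    ((hC.chord_eq_bot_or hw hg hgm).resolve_left hf)
  have hfwd := hC.sum_window_add_lt_zero (p := p + g) (g := m - g) (by omega) (by omega)
    (by rw [hC.apply_add_add_sub (by omega)]; exact hβ)
  have hsum := hC.sum_window_add_sum_window (p := p) (g := g) (by omega)
  omega

lemma sum_window_add_lt_zero_of_eq_bot (hC : ShortestAscendingCycle w m u e) (hw : ValidW α β w)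
    (hg : 0 < g) (hgm : g + 1 < m) (hf : w (u p) (u (p + g)) = ⊥) :
    ∑ t ∈ range g, e (p + t) + β (u (p + g)) (u p) < 0 :=
  hC.sum_window_add_lt_zero hg hgm ((hw.eq_bot_iff (hC.apply_ne_apply_add hg (by omega))).1 hf)

lemma chord_ne_bot_iff_eq_bot (hC : ShortestAscendingCycle w m u e) (hw : ValidW α β w)
    (hg : 2 ≤ g) (hgm : g + 2 ≤ m) :
    w (u p) (u (p + g)) ≠ ⊥ ↔ w (u (p + g)) (u (p + g + (m - g))) = ⊥ := by
  rw [hC.apply_add_add_sub (by omega)]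
  refine ⟨(hC.chord_eq_bot_or hw hg hgm).resolve_left, fun hb hf => ?_⟩
  rw [(hw.eq_bot_iff (hC.apply_ne_apply_add (by omega) (by omega))).1 hf] at hb
  exact WithBot.coe_ne_bot hb

lemma chord_ne_bot_iff_succ (hC : ShortestAscendingCycle w m u e) (hw : ValidW α β w)
    (hα : ∀ x y, x ≠ y → α x y = -β y x)
    (htri : ∀ x y z, x ≠ y → y ≠ z → x ≠ z → β x z < β x y + β y z + 2)
    (hg : 2 ≤ g) (hgm : g + 3 ≤ m) :
    w (u p) (u (p + g)) ≠ ⊥ ↔ w (u p) (u (p + (g + 1))) ≠ ⊥ := by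
  have hxy := hC.apply_ne_apply_add (p := p) (g := g) (by omega) (by omega)
  have hyz := hC.apply_ne_apply_add (p := p + g) (g := 1) (by omega) (by omega)
  have hxz := hC.apply_ne_apply_add (p := p) (g := g + 1) (by omega) (by omega)
  rw [← add_assoc] at hxz ⊢
  obtain ⟨he_lo, he_hi⟩ := hw.mem_Icc_of_eq hyz (hC.weight_eq (p + g))
  have hsucc := Finset.sum_range_succ (fun t => e (p + t)) g
  have hS := hC.sum_nonneg
  constructor
  · intro hf
    by_contra! hb
    have h₁ := hC.sum_add_lt_sum_window_of_ne_bot hw hg (by omega) hf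
    have h₂ := hC.sum_window_add_lt_zero_of_eq_bot hw (g := g + 1) (by omega) (by omega)
      (by rw [← add_assoc]; exact hb)
    rw [← add_assoc] at h₂
    have := htri _ _ _ hxz.symm hxy hyz.symm
    have := hα _ _ hyz
    omega
  · intro hf
    by_contra! hb
    have h₁ := hC.sum_window_add_lt_zero_of_eq_bot hw (by omega) (by omega) hb
    have h₂ := hC.sum_add_lt_sum_window_of_ne_bot hw (g := g + 1) (by omega) (by omega)
      (by rw [← add_assoc]; exact hf)
    rw [← add_assoc] at h₂
    have := htri _ _ _ hxy.symm hxz hyz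
    omega

lemma chord_ne_bot_iff_two (hC : ShortestAscendingCycle w m u e) (hw : ValidW α β w)
    (hα : ∀ x y, x ≠ y → α x y = -β y x)
    (htri : ∀ x y z, x ≠ y → y ≠ z → x ≠ z → β x z < β x y + β y z + 2)
    (hg : 2 ≤ g) (hgm : g + 2 ≤ m) :
    w (u p) (u (p + g)) ≠ ⊥ ↔ w (u p) (u (p + 2)) ≠ ⊥ := by
  induction g, hg using Nat.le_induction with
  | base => rfl
  | succ g hg ih => exact (hC.chord_ne_bot_iff_succ hw hα htri hg hgm).symm.trans (ih (by omega))

theorem lt_five (hC : ShortestAscendingCycle w m u e) (hw : ValidW α β w)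
    (hα : ∀ x y, x ≠ y → α x y = -β y x)
    (htri : ∀ x y z, x ≠ y → y ≠ z → x ≠ z → β x z < β x y + β y z + 2) : m < 5 := by
  by_contra! hm
  have hopp : ∀ p g, 2 ≤ g → g + 2 ≤ m →
      (w (u p) (u (p + 2)) ≠ ⊥ ↔ ¬ w (u (p + g)) (u (p + g + 2)) ≠ ⊥) := by
    intro p g hg hgm
    rw [← hC.chord_ne_bot_iff_two hw hα htri hg hgm, hC.chord_ne_bot_iff_eq_bot hw hg hgm,
      ← hC.chord_ne_bot_iff_two hw hα htri (g := m - g) (by omega) (by omega), not_not]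
  have h02 := hopp 0 2 le_rfl (by omega)
  have h03 := hopp 0 3 (by omega) (by omega)
  have h13 := hopp 1 2 le_rfl (by omega)
  have h14 := hopp 1 3 (by omega) (by omega)
  have h24 := hopp 2 2 le_rfl (by omega)
  norm_num at h02 h03 h13 h14 h24
  tauto

end ShortestAscendingCycle

section Truncated

variable {n : ℕ} {x y z : Fin n}

lemma trAlpha_eq_neg_trBeta (a b : ℤ) (hxy : x ≠ y) : trAlpha a b x y = -trBeta a b y x := by
  have := Fin.val_injective.ne hxy
  simp only [trAlpha, trBeta, Fin.lt_def]
  split_ifs <;> omega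

lemma trBeta_lt_add_add_two {a b : ℤ} (ha : 0 ≤ a) (hb : 0 ≤ b) (hxy : x ≠ y) (hyz : y ≠ z)
    (hxz : x ≠ z) : trBeta a b x z < trBeta a b x y + trBeta a b y z + 2 := by
  have := Fin.val_injective.ne hxy
  have := Fin.val_injective.ne hyz
  have := Fin.val_injective.ne hxz
  simp only [trBeta, Fin.lt_def]
  split_ifs <;> omega

end Truncated

theorem stmt8_general (n : ℕ) (a b : ℤ) (ha : 0 ≤ a) (hb : 0 ≤ b)
    (w : Fin n → Fin n → WithBot ℤ) (hw : ValidW (trAlpha a b) (trBeta a b) w) :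
    MAcyclic w ↔ ∀ c : List (Fin n), c.length ≤ 4 → ¬ MAscending w c := by
  refine ⟨fun h c _ => h c, fun h => by_contra fun hcyc => ?_⟩
  obtain ⟨c, hc, hmin⟩ := exists_shortest_mAscending hcyc
  obtain ⟨u, e, hC⟩ := hc.exists_shortestAscendingCycle hmin
  have := hC.lt_five hw (fun _ _ => trAlpha_eq_neg_trBeta a b)
    (fun _ _ _ => trBeta_lt_add_add_two ha hb)
  exact h c (by omega) hc

theorem stmt8 (n : ℕ) (a b : ℤ) (ha : 0 ≤ a) (hb : 0 ≤ b) (hab : 2 ≤ a + b)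
    (w : Fin n → Fin n → WithBot ℤ) (hw : ValidW (trAlpha a b) (trBeta a b) w) :
    MAcyclic w ↔ ∀ c : List (Fin n), c.length ≤ 4 → ¬ MAscending w c :=
  stmt8_general n a b ha hb w hw
end

section
/- Let n ≥ 3 and let a, b be integers with 1 ≤ a ≤ b. The truncated affine arrangement 𝒜^{a,b}_{n−1} (which is separated) satisfies the weak triangle inequality if and only if b ≤ a + 1. -/
/-- The deformation with bounds `a = α`, `b = β` satisfies the weak triangle
inequality: for every valid `m`-acyclic weight function `w` and pairwise
distinct `i, j, k`, if `w i j ≥ 0` and `w j k ≥ 0` then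
`w i k ≤ w i j + w j k + 1`. -/
def WeakTriangle {n : ℕ} (a b : Fin n → Fin n → ℤ) : Prop :=
  ∀ w : Fin n → Fin n → WithBot ℤ, ValidW a b w → MAcyclic w →
    ∀ i j k : Fin n, i ≠ j → j ≠ k → i ≠ k →
      0 ≤ w i j → 0 ≤ w j k → w i k ≤ w i j + w j k + 1

/-
Write `x, y, z` for the finite weights of `i → j`, `j → k`, `i → k`. If the reverse edges
`j → i` and `k → j` are both present, validity turns the cycle `i → k → j → i` into one of
weight `z - x - y - 2`, so acyclicity gives `z ≤ x + y + 1`.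
If one of them is missing, the forward edge sits at its upper bound `β`, and `z ≤ β(i,k)` is at
most that bound plus one, because for `a ≤ b ≤ a + 1` the upper bounds `a - 1, b - 1` differ by
at most one.

For `b ≥ a + 2`, orient every pair downwards at weight `a - 1`, except `1 → 2` at weight `b - 1`,
and give `{0, 2}` the finite pair `0, -1`. A rational potential `p` with `w u v < p u - p v` on
every edge shows that no cycle is ascending, while at `(i, j, k) = (1, 0, 2)` the inequality
would read `b - 1 ≤ (a - 1) + 0 + 1`.
-/

lemma List.exists_sum_map_eq_coe_lt {ι : Type*} {l : List ι} (hl : l ≠ [])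
    {g : ι → WithBot ℤ} {q : ι → ℚ} (h : ∀ e ∈ l, ∃ x : ℤ, g e = x ∧ (x : ℚ) < q e) :
    ∃ s : ℤ, (l.map g).sum = s ∧ (s : ℚ) < (l.map q).sum := by
  induction l with
  | nil => exact absurd rfl hl
  | cons e l ih =>
    obtain ⟨x, hx, hxq⟩ := h e mem_cons_self
    rcases eq_or_ne l [] with rfl | hl'
    · exact ⟨x, by simp [hx], by simpa using hxq⟩
    obtain ⟨s, hs, hsq⟩ := ih hl' fun e he => h e (mem_cons_of_mem _ he)
    refine ⟨x + s, by simp [hx, hs], ?_⟩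
    push_cast
    simp only [map_cons, sum_cons]
    exact add_lt_add hxq hsq

lemma sum_map_cpairs_sub {n : ℕ} (c : List (Fin n)) (p : Fin n → ℚ) :
    ((cpairs c).map fun e => p e.1 - p e.2).sum = 0 := by
  have hfst : (cpairs c).map Prod.fst = c := List.map_fst_zip (by simp)
  have hsnd : (cpairs c).map Prod.snd = c.rotate 1 := List.map_snd_zip (by simp)
  rw [← Multiset.sum_coe, ← Multiset.map_coe, Multiset.sum_map_sub, sub_eq_zero]
  simp only [Multiset.map_coe, Multiset.sum_coe]
  rw [← Function.comp_def p Prod.fst, ← Function.comp_def p Prod.snd, ← List.map_map,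
    ← List.map_map, hfst, hsnd, ((c.rotate_perm 1).map p).sum_eq]

theorem mAcyclic_of_lt_sub {n : ℕ} {w : Fin n → Fin n → WithBot ℤ} (p : Fin n → ℚ)
    (hp : ∀ u v (x : ℤ), w u v = x → (x : ℚ) < p u - p v) : MAcyclic w := by
  rintro c ⟨⟨hlen, -, hedge⟩, hnonneg⟩
  have hne : cpairs c ≠ [] := by
    rw [Ne, ← List.length_eq_zero_iff, cpairs, List.length_zip, List.length_rotate]; omega
  obtain ⟨s, hs, hlt⟩ := List.exists_sum_map_eq_coe_lt hne (q := fun e => p e.1 - p e.2)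
    fun e he => by
      obtain ⟨x, hx⟩ := WithBot.ne_bot_iff_exists.mp (hedge e he)
      exact ⟨x, hx.symm, hp _ _ x hx.symm⟩
  rw [sum_map_cpairs_sub] at hlt
  rw [cycWeight, hs] at hnonneg
  have : (0 : ℚ) ≤ s := by exact_mod_cast hnonneg
  linarith

section Triangle

variable {n : ℕ} {α β : Fin n → Fin n → ℤ} {w : Fin n → Fin n → WithBot ℤ}

lemma ValidW.reverse_eq {i j : Fin n} (hw : ValidW α β w) (hij : i ≠ j) {x y : ℤ}
    (hx : w i j = x) (hy : w j i = y) : y = -1 - x :=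
  (hw.2 i j hij).2.2 x y hx hy

lemma ValidW.eq_beta_of_reverse_eq_bot {i j : Fin n} (hw : ValidW α β w) (hij : i ≠ j)
    (hji : w j i = ⊥) : w i j = β i j :=
  ((hw.2 j i hij.symm).2.1).mp hji

lemma ValidW.le_beta {i j : Fin n} (hw : ValidW α β w) (hij : i ≠ j) {x : ℤ}
    (hx : w i j = x) : x ≤ β i j := by
  have := ((hw.2 i j hij).1 (by simp [hx])).2
  rwa [hx, WithBot.coe_le_coe] at this

lemma ValidW.le_add_add_one_of_reverse_ne_bot (hw : ValidW α β w) (hac : MAcyclic w)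
    {i j k : Fin n} (hij : i ≠ j) (hjk : j ≠ k) (hik : i ≠ k) {x y z : ℤ}
    (hx : w i j = x) (hy : w j k = y) (hz : w i k = z) (hji : w j i ≠ ⊥) (hkj : w k j ≠ ⊥) :
    z ≤ x + y + 1 := by
  obtain ⟨x', hx'⟩ := WithBot.ne_bot_iff_exists.mp hji
  obtain ⟨y', hy'⟩ := WithBot.ne_bot_iff_exists.mp hkj
  have hcp : cpairs [i, k, j] = [(i, k), (k, j), (j, i)] := by simp [cpairs, List.rotate]
  have hcycle : IsCycle w [i, k, j] := by
    refine ⟨by simp, by simp [hik, hij, hjk.symm], ?_⟩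
    simp only [hcp, List.mem_cons, List.not_mem_nil, or_false]
    rintro p (rfl | rfl | rfl) <;> simp [hz, ← hx', ← hy']
  have hweight : cycWeight w [i, k, j] = ((z + y' + x' : ℤ) : WithBot ℤ) := by
    simp [cycWeight, hcp, hz, ← hx', ← hy', add_assoc]
  have hneg : ¬ (0 : WithBot ℤ) ≤ cycWeight w [i, k, j] := fun h => hac _ ⟨hcycle, h⟩
  rw [hweight, ← WithBot.coe_zero, WithBot.coe_le_coe] at hneg
  have := hw.reverse_eq hij hx hx'.symm
  have := hw.reverse_eq hjk hy hy'.symm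
  omega

theorem weakTriangle_of_beta_le_add_one
    (hβ : ∀ i j k : Fin n, β i k ≤ β i j + 1 ∧ β i k ≤ β j k + 1) : WeakTriangle α β := by
  intro w hw hac i j k hij hjk hik hxij hyjk
  obtain ⟨x, hx, hx0⟩ := WithBot.coe_le_iff.mp hxij
  obtain ⟨y, hy, hy0⟩ := WithBot.coe_le_iff.mp hyjk
  induction hz : w i k using WithBot.recBotCoe with
  | bot => exact bot_le
  | coe z =>
    rw [hx, hy]
    have hzβ := hw.le_beta hik hz
    suffices z ≤ x + y + 1 by exact_mod_cast this
    by_cases hji : w j i = ⊥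
    · have := hw.eq_beta_of_reverse_eq_bot hij hji
      rw [hx, WithBot.coe_inj] at this
      linarith [(hβ i j k).1]
    by_cases hkj : w k j = ⊥
    · have := hw.eq_beta_of_reverse_eq_bot hjk hkj
      rw [hy, WithBot.coe_inj] at this
      linarith [(hβ i j k).2]
    exact hw.le_add_add_one_of_reverse_ne_bot hac hij hjk hik hx hy hz hji hkj

end Triangle

lemma trBeta_le_trBeta_add_one {n : ℕ} {a b : ℤ} (hab : a ≤ b) (hb : b ≤ a + 1)
    (u v u' v' : Fin n) : trBeta a b u v ≤ trBeta a b u' v' + 1 := by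
  unfold trBeta; split_ifs <;> omega

theorem weakTriangle_trAlpha_trBeta {n : ℕ} {a b : ℤ} (hab : a ≤ b) (hb : b ≤ a + 1) :
    WeakTriangle (trAlpha (n := n) a b) (trBeta a b) :=
  weakTriangle_of_beta_le_add_one fun _ _ _ =>
    ⟨trBeta_le_trBeta_add_one hab hb _ _ _ _, trBeta_le_trBeta_add_one hab hb _ _ _ _⟩

lemma validW_trAlpha_trBeta_of_pairs {n : ℕ} {a b : ℤ} {w : Fin n → Fin n → WithBot ℤ}
    (hab : 2 ≤ a + b) (hloop : ∀ i, w i i = ⊥)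
    (hpair : ∀ i j : Fin n, i < j →
      (w i j = (b - 1 : ℤ) ∧ w j i = ⊥) ∨ (w i j = ⊥ ∧ w j i = (a - 1 : ℤ)) ∨
        ∃ x : ℤ, 1 - a ≤ x ∧ x ≤ b - 2 ∧ w i j = x ∧ w j i = (-1 - x : ℤ)) :
    ValidW (trAlpha a b) (trBeta a b) w := by
  refine ⟨hloop, fun i j hij => ?_⟩
  rcases hij.lt_or_gt with hlt | hlt <;>
  · simp only [trAlpha, trBeta, if_pos hlt, if_neg hlt.not_gt]
    rcases hpair _ _ hlt with ⟨h1, h2⟩ | ⟨h1, h2⟩ | ⟨x, hx1, hx2, h1, h2⟩ <;>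
      simp [h1, h2] <;> omega

def counterexampleWeight (a b : ℤ) {n : ℕ} (u v : Fin n) : WithBot ℤ :=
  if (u : ℕ) = 0 ∧ (v : ℕ) = 2 then (0 : ℤ)
  else if (u : ℕ) = 2 ∧ (v : ℕ) = 0 then (-1 : ℤ)
  else if (u : ℕ) = 1 ∧ (v : ℕ) = 2 then (b - 1 : ℤ)
  else if (u : ℕ) = 2 ∧ (v : ℕ) = 1 then ⊥
  else if v < u then (a - 1 : ℤ) else ⊥

lemma validW_counterexampleWeight {n : ℕ} {a b : ℤ} (ha : 1 ≤ a) (hb : a + 1 < b) :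
    ValidW (trAlpha (n := n) a b) (trBeta a b) (counterexampleWeight a b) := by
  refine validW_trAlpha_trBeta_of_pairs (by omega)
    (fun i => by simp (disch := omega) only [counterexampleWeight, if_neg, lt_irrefl, if_false])
    fun i j hij => ?_
  rw [Fin.lt_def] at hij
  by_cases h02 : (i : ℕ) = 0 ∧ (j : ℕ) = 2
  · right; right
    exact ⟨0, by omega, by omega, by simp [counterexampleWeight, h02],
      by simp [counterexampleWeight, h02]⟩
  by_cases h12 : (i : ℕ) = 1 ∧ (j : ℕ) = 2
  · left
    simp [counterexampleWeight, h12]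
  · right; left
    constructor <;> simp (disch := omega) only [counterexampleWeight, Fin.lt_def, if_pos, if_neg]

lemma mAcyclic_counterexampleWeight {n : ℕ} {a b : ℤ} (ha : 1 ≤ a) (hb : a + 1 < b) :
    MAcyclic (counterexampleWeight (n := n) a b) := by
  refine mAcyclic_of_lt_sub (fun u => if (u : ℕ) = 2 then -1 / 2 else (a + b) * (u : ℕ))
    fun u v x hx => ?_
  have ha' : (1 : ℚ) ≤ a := by exact_mod_cast ha
  have hb' : (a : ℚ) + 2 ≤ b := by exact_mod_cast (by omega : a + 2 ≤ b)
  simp only [counterexampleWeight, Fin.lt_def] at hx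
  split_ifs at hx with h02 h20 h12 h21 hvu <;>
    simp only [WithBot.coe_inj, WithBot.bot_ne_coe] at hx <;> subst hx
  · norm_num [h02]
  · norm_num [h20]
  · simp [h12]; linarith
  · have hu : (u : ℕ) ≠ 2 := by omega
    have hvu' : ((v : ℕ) : ℚ) + 1 ≤ (u : ℕ) := by exact_mod_cast hvu
    simp only [if_neg hu]
    split_ifs with hv
    · have : (3 : ℚ) ≤ (u : ℕ) := by exact_mod_cast (by omega : 3 ≤ (u : ℕ))
      push_cast; nlinarith
    · push_cast; nlinarith

theorem not_weakTriangle_trAlpha_trBeta {n : ℕ} (hn : 3 ≤ n) {a b : ℤ} (ha : 1 ≤ a)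
    (hb : a + 1 < b) :
    ¬ WeakTriangle (trAlpha (n := n) a b) (trBeta a b) := by
  intro hwt
  let i : Fin n := ⟨1, by omega⟩
  let j : Fin n := ⟨0, by omega⟩
  let k : Fin n := ⟨2, by omega⟩
  have hij : counterexampleWeight a b i j = (a - 1 : ℤ) := by simp [counterexampleWeight, i, j]
  have hjk : counterexampleWeight a b j k = (0 : ℤ) := by simp [counterexampleWeight, j, k]
  have hik : counterexampleWeight a b i k = (b - 1 : ℤ) := by simp [counterexampleWeight, i, k]
  have hviolated := hwt _ (validW_counterexampleWeight ha hb)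
    (mAcyclic_counterexampleWeight ha hb) i j k (by simp [i, j]) (by simp [j, k]) (by simp [i, k])
    (by rw [hij]; exact_mod_cast (by omega : 0 ≤ a - 1)) (by rw [hjk]; rfl)
  rw [hij, hjk, hik] at hviolated
  have : b - 1 ≤ a - 1 + 0 + 1 := by exact_mod_cast hviolated
  omega

theorem stmt10 (n : ℕ) (hn : 3 ≤ n) (a b : ℤ) (ha : 1 ≤ a) (hab : a ≤ b) :
    WeakTriangle (trAlpha (n := n) a b) (trBeta a b) ↔ b ≤ a + 1 := by
  refine ⟨fun hwt => ?_, weakTriangle_trAlpha_trBeta hab⟩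
  by_contra! hb
  exact not_weakTriangle_trAlpha_trBeta hn ha hb hwt
end

section
/- Let a, b be integers with 1 ≤ a ≤ b ≤ a + 1. Then a valid weight function of the truncated affine arrangement 𝒜^{a,b}_{n−1} is m-acyclic (has no m-ascending directed cycle) if and only if it contains no m-ascending directed cycle of length three. -/
/-!
Strong induction on the length `m` of an ascending cycle `x₀ → x₁ → ⋯`, of weight `S ≥ 0`.
Two-cycles weigh `-1` and three-cycles are excluded, so let `m ≥ 4` and look at the chords
`xₖ → xₖ₊₂`. If such a chord is absent, the reverse chord weighs `β(xₖ₊₂, xₖ)` and the triangle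
`xₖ xₖ₊₁ xₖ₊₂` gives `wₖ + wₖ₊₁ + β(xₖ₊₂, xₖ) < 0`. If it is present, the triangle and the
shorter cycle skipping `xₖ₊₁` are not ascending, which forces the reverse chord to be absent
and gives `S + β(xₖ, xₖ₊₂) < wₖ + wₖ₊₁`. When `a ≤ b ≤ a + 1`, the two kinds of windows cannot
be adjacent: comparing the bounds with the values of `α` and `β` would force the cyclic order
`xₖ < xₖ₊₁ < xₖ₊₃ < xₖ₊₂ < xₖ`. If all chords are present, every edge weighs at least `S ≥ 0`,
so `S ≥ w₀ + w₁ > S + a - 1`; if none is, every edge weighs at most `0`, so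
`0 ≤ S ≤ w₀ + w₁ < 1 - a`.
-/
lemma List.exists_eq_cons₄ {α : Type*} {c : List α} (h : 4 ≤ c.length) :
    ∃ x y z t l, c = x :: y :: z :: t :: l := by
  match c, h with
  | x :: y :: z :: t :: l, _ => exact ⟨x, y, z, t, l, rfl⟩

section Cycles

variable {n : ℕ} (w : Fin n → Fin n → WithBot ℤ)

lemma cpairs_cons_cons (x y : Fin n) (l : List (Fin n)) :
    cpairs (x :: y :: l) = (x, y) :: (y :: l).zip (l ++ [x]) :=
  List.zipWith_rotate_one Prod.mk x y l

lemma cpairs_rotate (c : List (Fin n)) (k : ℕ) : cpairs (c.rotate k) = (cpairs c).rotate k := by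
  rw [cpairs, cpairs, List.zip_eq_zipWith, List.zip_eq_zipWith,
    List.zipWith_rotate_distrib _ _ _ _ (by simp), List.rotate_rotate, List.rotate_rotate, add_comm]

lemma exists_rotate_eq_of_mem_cpairs {c : List (Fin n)} (hc : 4 ≤ c.length) {p : Fin n × Fin n}
    (hp : p ∈ cpairs c) : ∃ k z l, c.rotate k = p.1 :: p.2 :: z :: l := by
  obtain ⟨i, hi, rfl⟩ := List.getElem_of_mem hp
  obtain ⟨x, y, z, t, l, hr⟩ := List.exists_eq_cons₄ (c := c.rotate i) (by simpa using hc)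
  have h0 := List.getElem?_rotate (l := cpairs c) (n := i) (m := 0) (by omega)
  rw [← cpairs_rotate, hr, cpairs_cons_cons, zero_add, Nat.mod_eq_of_lt hi] at h0
  simp only [List.getElem?_cons_zero, List.getElem?_eq_getElem hi, Option.some.injEq] at h0
  exact ⟨i, z, t :: l, by rw [← h0, hr]⟩

/-- The integer weight of an edge, with junk value `0` for an absent edge. -/
def edgeWeight (u v : Fin n) : ℤ := (w u v).unbotD 0

def intWeight (c : List (Fin n)) : ℤ := ((cpairs c).map fun p => edgeWeight w p.1 p.2).sum

variable {w}

lemma coe_edgeWeight {u v : Fin n} (h : w u v ≠ ⊥) : (edgeWeight w u v : WithBot ℤ) = w u v := by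
  obtain ⟨x, hx⟩ := WithBot.ne_bot_iff_exists.1 h
  rw [edgeWeight, ← hx, WithBot.unbotD_coe]

lemma IsCycle.cycWeight_eq {c : List (Fin n)} (hc : IsCycle w c) :
    cycWeight w c = intWeight w c := by
  rw [cycWeight, intWeight, ← WithBot.coe_addHom, map_list_sum, List.map_map]
  exact congrArg List.sum (List.map_congr_left fun p hp => (coe_edgeWeight (hc.2.2 p hp)).symm)

lemma IsCycle.mAscending_iff {c : List (Fin n)} (hc : IsCycle w c) :
    MAscending w c ↔ 0 ≤ intWeight w c := by
  rw [MAscending, hc.cycWeight_eq, and_iff_right hc, WithBot.coe_nonneg]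

lemma IsCycle.rotate {c : List (Fin n)} (hc : IsCycle w c) (k : ℕ) : IsCycle w (c.rotate k) :=
  ⟨by simpa using hc.1, List.nodup_rotate.2 hc.2.1,
    fun p hp => hc.2.2 p (List.mem_rotate.1 (cpairs_rotate c k ▸ hp))⟩

lemma intWeight_rotate (c : List (Fin n)) (k : ℕ) : intWeight w (c.rotate k) = intWeight w c := by
  rw [intWeight, intWeight, cpairs_rotate]
  exact ((List.rotate_perm _ k).map _).sum_eq

lemma MAscending.rotate {c : List (Fin n)} (hc : MAscending w c) (k : ℕ) :
    MAscending w (c.rotate k) := by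
  rw [(hc.1.rotate k).mAscending_iff, intWeight_rotate]
  exact hc.1.mAscending_iff.1 hc

variable (w) in
lemma intWeight_pair (x y : Fin n) : intWeight w [x, y] = edgeWeight w x y + edgeWeight w y x := by
  simp [intWeight, cpairs_cons_cons]

variable (w) in
lemma intWeight_triangle (x y z : Fin n) :
    intWeight w [x, y, z] = edgeWeight w x y + edgeWeight w y z + edgeWeight w z x := by
  simp [intWeight, cpairs_cons_cons, add_assoc]

variable (w) in
lemma intWeight_add_edgeWeight (x y z : Fin n) (l : List (Fin n)) :
    intWeight w (x :: y :: z :: l) + edgeWeight w x z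
      = edgeWeight w x y + edgeWeight w y z + intWeight w (x :: z :: l) := by
  simp [intWeight, cpairs_cons_cons]
  ring

lemma IsCycle.shortcut {x y z : Fin n} {l : List (Fin n)} (hc : IsCycle w (x :: y :: z :: l))
    (hxz : w x z ≠ ⊥) : IsCycle w (x :: z :: l) := by
  refine ⟨by simp, hc.2.1.sublist ((List.sublist_cons_self y _).cons_cons x), fun p hp => ?_⟩
  rw [cpairs_cons_cons, List.mem_cons] at hp
  rcases hp with rfl | hp
  · exact hxz
  · exact hc.2.2 p (by simp [cpairs_cons_cons, hp])

lemma IsCycle.triangle {x y z : Fin n} {l : List (Fin n)} (hc : IsCycle w (x :: y :: z :: l))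
    (hzx : w z x ≠ ⊥) : IsCycle w [x, y, z] := by
  have hnd := hc.2.1
  simp only [List.nodup_cons, List.mem_cons, not_or] at hnd
  refine ⟨by simp, by simp [hnd.1.1, hnd.1.2.1, hnd.2.1.1], fun p hp => ?_⟩
  have hxy : w x y ≠ ⊥ := hc.2.2 (x, y) (by simp [cpairs_cons_cons])
  have hyz : w y z ≠ ⊥ := hc.2.2 (y, z) (by simp [cpairs_cons_cons])
  simp only [cpairs_cons_cons, List.cons_append, List.nil_append, List.zip_cons_cons,
    List.zip_nil_right, List.mem_cons, List.not_mem_nil, or_false] at hp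
  rcases hp with rfl | rfl | rfl <;> assumption

lemma add_le_intWeight {x y z : Fin n} {l : List (Fin n)}
    (h : ∀ p ∈ cpairs (x :: y :: z :: l), 0 ≤ edgeWeight w p.1 p.2) :
    edgeWeight w x y + edgeWeight w y z ≤ intWeight w (x :: y :: z :: l) := by
  simp only [intWeight, cpairs_cons_cons, List.cons_append, List.zip_cons_cons, List.map_cons,
    List.sum_cons] at h ⊢
  have := List.sum_nonneg (l := ((z :: l).zip (l ++ [x])).map fun p => edgeWeight w p.1 p.2)
    fun q hq => by
      obtain ⟨p, hp, rfl⟩ := List.mem_map.1 hq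
      exact h p (by simp [hp])
  linarith

lemma intWeight_le_add {x y z : Fin n} {l : List (Fin n)}
    (h : ∀ p ∈ cpairs (x :: y :: z :: l), edgeWeight w p.1 p.2 ≤ 0) :
    intWeight w (x :: y :: z :: l) ≤ edgeWeight w x y + edgeWeight w y z := by
  simp only [intWeight, cpairs_cons_cons, List.cons_append, List.zip_cons_cons, List.map_cons,
    List.sum_cons] at h ⊢
  have := List.sum_le_card_nsmul (((z :: l).zip (l ++ [x])).map fun p => edgeWeight w p.1 p.2) 0
    fun q hq => by
      obtain ⟨p, hp, rfl⟩ := List.mem_map.1 hq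
      exact h p (by simp [hp])
  rw [smul_zero] at this
  linarith

end Cycles

section ValidWeights

variable {n : ℕ} {lo hi : Fin n → Fin n → ℤ} {w : Fin n → Fin n → WithBot ℤ} {u v : Fin n}

lemma ValidW.ne_of_ne_bot (hw : ValidW lo hi w) (h : w u v ≠ ⊥) : u ≠ v :=
  fun huv => h (huv ▸ hw.1 u)

lemma ValidW.edgeWeight_mem (hw : ValidW lo hi w) (h : w u v ≠ ⊥) :
    lo u v ≤ edgeWeight w u v ∧ edgeWeight w u v ≤ hi u v := by
  have := (hw.2 u v (hw.ne_of_ne_bot h)).1 h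
  rw [← coe_edgeWeight h] at this
  exact_mod_cast this

lemma ValidW.edgeWeight_eq_hi_of_eq_bot (hw : ValidW lo hi w) (huv : u ≠ v) (h : w u v = ⊥) :
    edgeWeight w v u = hi v u := by
  rw [edgeWeight, (hw.2 u v huv).2.1.1 h, WithBot.unbotD_coe]

lemma ValidW.edgeWeight_add_edgeWeight (hw : ValidW lo hi w) (h₁ : w u v ≠ ⊥) (h₂ : w v u ≠ ⊥) :
    edgeWeight w u v + edgeWeight w v u = -1 := by
  have := (hw.2 u v (hw.ne_of_ne_bot h₁)).2.2 _ _ (coe_edgeWeight h₁).symm (coe_edgeWeight h₂).symm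
  omega

lemma ValidW.not_mAscending_pair (hw : ValidW lo hi w) (u v : Fin n) : ¬ MAscending w [u, v] := by
  intro hc
  have h₁ : w u v ≠ ⊥ := hc.1.2.2 (u, v) (by simp [cpairs_cons_cons])
  have h₂ : w v u ≠ ⊥ := hc.1.2.2 (v, u) (by simp [cpairs_cons_cons])
  have := hc.1.mAscending_iff.1 hc
  rw [intWeight_pair, hw.edgeWeight_add_edgeWeight h₁ h₂] at this
  omega

variable {x y z : Fin n} {l : List (Fin n)}

lemma ValidW.edgeWeight_add_hi_neg (hw : ValidW lo hi w) (hc : IsCycle w (x :: y :: z :: l))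
    (htri : ¬ MAscending w [x, y, z]) (hxz : w x z = ⊥) :
    edgeWeight w x y + edgeWeight w y z + hi z x < 0 := by
  have hxz' : x ≠ z := by
    have hnd := hc.2.1
    simp only [List.nodup_cons, List.mem_cons, not_or] at hnd
    exact hnd.1.2.1
  have hzx : w z x ≠ ⊥ := by rw [(hw.2 x z hxz').2.1.1 hxz]; exact WithBot.coe_ne_bot
  rw [(hc.triangle hzx).mAscending_iff, not_le, intWeight_triangle,
    hw.edgeWeight_eq_hi_of_eq_bot hxz' hxz] at htri
  exact htri

/-- The reverse chord `z → x` is absent, since otherwise the triangle `x y z` and the shortcut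
cycle would together outweigh the cycle; this pins the weight of `x → z` to `hi x z`. -/
lemma ValidW.intWeight_add_hi_lt (hw : ValidW lo hi w) (hc : MAscending w (x :: y :: z :: l))
    (htri : ¬ MAscending w [x, y, z]) (hshort : ¬ MAscending w (x :: z :: l)) (hxz : w x z ≠ ⊥) :
    intWeight w (x :: y :: z :: l) + hi x z < edgeWeight w x y + edgeWeight w y z := by
  have hS := hc.1.mAscending_iff.1 hc
  rw [(hc.1.shortcut hxz).mAscending_iff, not_le] at hshort
  have hsplit := intWeight_add_edgeWeight w x y z l
  have hzx : w z x = ⊥ := by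
    by_contra hzx
    rw [(hc.1.triangle hzx).mAscending_iff, not_le, intWeight_triangle] at htri
    have := hw.edgeWeight_add_edgeWeight hxz hzx
    linarith
  rw [hw.edgeWeight_eq_hi_of_eq_bot (hw.ne_of_ne_bot hxz).symm hzx] at hsplit
  linarith

variable {c : List (Fin n)} {k : ℕ}

lemma ValidW.window_of_rotate_eq (hw : ValidW lo hi w) (hc : MAscending w c) (hlen : 4 ≤ c.length)
    (hshort : ∀ c', c'.length < c.length → ¬ MAscending w c') (hk : c.rotate k = x :: y :: z :: l) :
    (w x z ≠ ⊥ → intWeight w c + hi x z < edgeWeight w x y + edgeWeight w y z) ∧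
      (w x z = ⊥ → edgeWeight w x y + edgeWeight w y z + hi z x < 0) := by
  have hck := hk ▸ hc.rotate k
  have hl : c.length = l.length + 3 := by rw [← List.length_rotate c k, hk]; simp
  refine ⟨fun hxz => ?_, hw.edgeWeight_add_hi_neg hck.1 (hshort _ (by simp; omega))⟩
  rw [← intWeight_rotate c k, hk]
  exact hw.intWeight_add_hi_lt hck (hshort _ (by simp; omega)) (hshort _ (by simp [hl])) hxz

end ValidWeights

section Truncated

variable {n : ℕ} {a b : ℤ}

lemma trAlpha_mem (hab : a ≤ b) (u v : Fin n) :
    1 - b ≤ trAlpha a b u v ∧ trAlpha a b u v ≤ 1 - a := by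
  unfold trAlpha; split_ifs <;> omega

lemma trBeta_mem (hab : a ≤ b) (u v : Fin n) :
    a - 1 ≤ trBeta a b u v ∧ trBeta a b u v ≤ b - 1 := by
  unfold trBeta; split_ifs <;> omega

/-- The left side is at most `2b - 2 ≤ 2a` and the right side at least `2a`; equality throughout
would force `x < y ≤ t ≤ z ≤ x`. -/
lemma trBeta_sub_trAlpha_lt (hab : a ≤ b) (hba : b ≤ a + 1) (x y z t : Fin n) :
    trBeta a b x y - trAlpha a b z t < 2 + trBeta a b x z + trBeta a b t y := by
  unfold trAlpha trBeta
  split_ifs <;> omega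

variable {w : Fin n → Fin n → WithBot ℤ} {c : List (Fin n)}

lemma chord_ne_bot_iff (hab : a ≤ b) (hba : b ≤ a + 1) (hw : ValidW (trAlpha a b) (trBeta a b) w)
    (hc : MAscending w c) (hlen : 4 ≤ c.length)
    (hshort : ∀ c', c'.length < c.length → ¬ MAscending w c') {k : ℕ} {x y z t : Fin n}
    {l : List (Fin n)} (hk : c.rotate k = x :: y :: z :: t :: l) : w x z ≠ ⊥ ↔ w y t ≠ ⊥ := by
  have hk' : c.rotate (k + 1) = y :: z :: t :: (l ++ [x]) := by
    rw [← List.rotate_rotate, hk]; simp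
  have hS := hc.1.mAscending_iff.1 hc
  have hwin := hw.window_of_rotate_eq hc hlen hshort hk
  have hwin' := hw.window_of_rotate_eq hc hlen hshort hk'
  have hxy := hw.edgeWeight_mem ((hk ▸ hc.rotate k).1.2.2 (x, y) (by simp [cpairs_cons_cons]))
  have hzt := hw.edgeWeight_mem ((hk ▸ hc.rotate k).1.2.2 (z, t) (by simp [cpairs_cons_cons]))
  constructor
  · intro hxz
    by_contra! hyt
    linarith [hwin.1 hxz, hwin'.2 hyt, trBeta_sub_trAlpha_lt hab hba x y z t]
  · intro hyt
    by_contra! hxz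
    linarith [hwin.2 hxz, hwin'.1 hyt, trBeta_sub_trAlpha_lt hab hba z t x y]

def HeadChord (w : Fin n → Fin n → WithBot ℤ) : List (Fin n) → Prop
  | x :: _ :: z :: _ => w x z ≠ ⊥
  | _ => False

lemma headChord_rotate_iff (hab : a ≤ b) (hba : b ≤ a + 1)
    (hw : ValidW (trAlpha a b) (trBeta a b) w) (hc : MAscending w c) (hlen : 4 ≤ c.length)
    (hshort : ∀ c', c'.length < c.length → ¬ MAscending w c') (k : ℕ) :
    HeadChord w (c.rotate k) ↔ HeadChord w c := by
  induction k with
  | zero => rw [List.rotate_zero]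
  | succ k ih =>
    obtain ⟨x, y, z, t, l, hk⟩ := List.exists_eq_cons₄ (c := c.rotate k) (by simpa using hlen)
    rw [← ih, ← List.rotate_rotate, hk]
    simp only [List.rotate_cons_succ, List.rotate_zero, List.cons_append, HeadChord]
    exact (chord_ne_bot_iff hab hba hw hc hlen hshort hk).symm

lemma false_of_forall_headChord_rotate (ha : 1 ≤ a) (hab : a ≤ b) (hba : b ≤ a + 1)
    (hw : ValidW (trAlpha a b) (trBeta a b) w) (hc : MAscending w c) (hlen : 4 ≤ c.length)
    (hshort : ∀ c', c'.length < c.length → ¬ MAscending w c')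
    (hchord : ∀ k, HeadChord w (c.rotate k)) : False := by
  have hS := hc.1.mAscending_iff.1 hc
  have hedge : ∀ p ∈ cpairs c, intWeight w c ≤ edgeWeight w p.1 p.2 := by
    intro p hp
    obtain ⟨k, z, l, hk⟩ := exists_rotate_eq_of_mem_cpairs hlen hp
    have hA := (hw.window_of_rotate_eq hc hlen hshort hk).1
      (by simpa [hk, HeadChord] using hchord k)
    have hyz := hw.edgeWeight_mem ((hk ▸ hc.rotate k).1.2.2 (p.2, z) (by simp [cpairs_cons_cons]))
    linarith [trBeta_mem hab p.1 z, trBeta_mem hab p.2 z]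
  obtain ⟨x, y, z, t, l, rfl⟩ := List.exists_eq_cons₄ hlen
  have hA := (hw.window_of_rotate_eq hc hlen hshort (List.rotate_zero _)).1 (hchord 0)
  have := add_le_intWeight fun p hp => hS.trans (hedge p hp)
  linarith [trBeta_mem hab x z]

lemma false_of_forall_not_headChord_rotate (ha : 1 ≤ a) (hab : a ≤ b) (hba : b ≤ a + 1)
    (hw : ValidW (trAlpha a b) (trBeta a b) w) (hc : MAscending w c) (hlen : 4 ≤ c.length)
    (hshort : ∀ c', c'.length < c.length → ¬ MAscending w c')
    (hchord : ∀ k, ¬ HeadChord w (c.rotate k)) : False := by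
  have hS := hc.1.mAscending_iff.1 hc
  have hedge : ∀ p ∈ cpairs c, edgeWeight w p.1 p.2 ≤ 0 := by
    intro p hp
    obtain ⟨k, z, l, hk⟩ := exists_rotate_eq_of_mem_cpairs hlen hp
    have hB := (hw.window_of_rotate_eq hc hlen hshort hk).2
      (by simpa [hk, HeadChord] using hchord k)
    have hyz := hw.edgeWeight_mem ((hk ▸ hc.rotate k).1.2.2 (p.2, z) (by simp [cpairs_cons_cons]))
    linarith [trAlpha_mem hab p.2 z, trBeta_mem hab z p.1]
  obtain ⟨x, y, z, t, l, rfl⟩ := List.exists_eq_cons₄ hlen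
  have hB := (hw.window_of_rotate_eq hc hlen hshort (List.rotate_zero _)).2
    (by simpa [HeadChord] using hchord 0)
  have := intWeight_le_add hedge
  linarith [trBeta_mem hab z x]

end Truncated

theorem stmt11 (n : ℕ) (a b : ℤ) (ha : 1 ≤ a) (hab : a ≤ b) (hba : b ≤ a + 1)
    (w : Fin n → Fin n → WithBot ℤ) (hw : ValidW (trAlpha a b) (trBeta a b) w) :
    MAcyclic w ↔ ∀ c : List (Fin n), c.length = 3 → ¬ MAscending w c := by
  refine ⟨fun h c _ => h c, fun h3 c => ?_⟩
  induction hlen : c.length using Nat.strong_induction_on generalizing c with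
  | _ m ih =>
  subst hlen
  have hshort : ∀ c', c'.length < c.length → ¬ MAscending w c' := fun c' h => ih _ h c' rfl
  intro hc
  rcases (by have := hc.1.1; omega : c.length = 2 ∨ c.length = 3 ∨ 4 ≤ c.length)
    with h2 | h3' | h4
  · obtain ⟨u, v, rfl⟩ := List.length_eq_two.1 h2
    exact hw.not_mAscending_pair u v hc
  · exact h3 c h3' hc
  · by_cases hchord : HeadChord w c
    · exact false_of_forall_headChord_rotate ha hab hba hw hc h4 hshort
        fun k => (headChord_rotate_iff hab hba hw hc h4 hshort k).2 hchord
    · exact false_of_forall_not_headChord_rotate ha hab hba hw hc h4 hshort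
        fun k => (headChord_rotate_iff hab hba hw hc h4 hshort k).not.2 hchord
end
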